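/- arXiv:2406.08992 — 5 statements merged into one kernel-verified Lean document; each statement's English description precedes it below -/
import Mathlib

section
/- Let n1, n2 be positive integers, let J : ℝ^{n1×n2} × ℝ^{n1} → ℝ be lower semicontinuous, let μ2^d ∈ ℝ^{n2} with μ2^d ≥ 0 componentwise, and let c_d ∈ ℝ^{n1×n2}. Then the bilevel Hitchcock problem has at least one optimal solution: there exists (π*, μ1*) in the bilevel feasible set F(μ2^d, c_d) such that J(π*, μ1*) ≤ J(π, μ1) for all (π, μ1) ∈ F(μ2^d, c_d). -/
noncomputable section

/-- The transport polytope Π(μ1, μ2). -/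
def transportPolytope {n1 n2 : ℕ} (μ1 : Fin n1 → ℝ) (μ2 : Fin n2 → ℝ) :
    Set (Fin n1 → Fin n2 → ℝ) :=
  {π | (∀ i j, 0 ≤ π i j) ∧ (∀ i, (∑ j, π i j) = μ1 i) ∧ (∀ j, (∑ i, π i j) = μ2 j)}

/-- The Frobenius inner product ⟨c, π⟩_F. -/
def frob {n1 n2 : ℕ} (c π : Fin n1 → Fin n2 → ℝ) : ℝ := ∑ i, ∑ j, c i j * π i j

/-- π solves the Hitchcock problem (H) w.r.t. μ1, μ2, c. -/
def SolvesH {n1 n2 : ℕ} (μ1 : Fin n1 → ℝ) (μ2 : Fin n2 → ℝ)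
    (c π : Fin n1 → Fin n2 → ℝ) : Prop :=
  π ∈ transportPolytope μ1 μ2 ∧
    ∀ θ ∈ transportPolytope μ1 μ2, frob c π ≤ frob c θ

/-- The bilevel feasible set F(μ2, c). -/
def bilevelFeas {n1 n2 : ℕ} (μ2 : Fin n2 → ℝ) (c : Fin n1 → Fin n2 → ℝ) :
    Set ((Fin n1 → Fin n2 → ℝ) × (Fin n1 → ℝ)) :=
  {p | (∀ i, 0 ≤ p.2 i) ∧ ((∑ i, p.2 i) = ∑ j, μ2 j) ∧ SolvesH p.2 μ2 c p.1}

/-!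
The feasible set `F` is bounded by the marginal constraints, so the point is that it is closed;
then the lower semicontinuous `J` attains its minimum on the nonempty compact set `F`.
Closedness of the optimality condition rests on a lower hemicontinuity estimate: a plan for
row marginal `μ` can be changed into a plan for any `μ'` of the same mass at sup-distance at
most `‖μ' - μ‖`. Hence every competitor at a limit point of `F` is the limit of competitors
along the approximating sequence, and the optimality inequality passes to the limit.
-/

open Filter Topology

variable {m n : ℕ}

namespace transportPolytope

variable {μ a : Fin m → ℝ} {ν b : Fin n → ℝ} {π κ : Fin m → Fin n → ℝ}

theorem nonneg_left (hπ : π ∈ transportPolytope μ ν) : 0 ≤ μ := fun i =>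
  hπ.2.1 i ▸ Finset.sum_nonneg fun j _ => hπ.1 i j

theorem nonneg_right (hπ : π ∈ transportPolytope μ ν) : 0 ≤ ν := fun j =>
  hπ.2.2 j ▸ Finset.sum_nonneg fun i _ => hπ.1 i j

theorem apply_le_left (hπ : π ∈ transportPolytope μ ν) (i : Fin m) (j : Fin n) :
    π i j ≤ μ i :=
  hπ.2.1 i ▸ Finset.single_le_sum (fun j _ => hπ.1 i j) (Finset.mem_univ j)

theorem apply_le_right (hπ : π ∈ transportPolytope μ ν) (i : Fin m) (j : Fin n) :
    π i j ≤ ν j :=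
  hπ.2.2 j ▸ Finset.single_le_sum (fun i _ => hπ.1 i j) (Finset.mem_univ i)

theorem sum_left_eq_sum_right (hπ : π ∈ transportPolytope μ ν) :
    ∑ i, μ i = ∑ j, ν j := by
  simp only [← hπ.2.1, ← hπ.2.2]
  exact Finset.sum_comm

theorem add_mem (hκ : κ ∈ transportPolytope a b) (hπ : π ∈ transportPolytope μ ν) :
    κ + π ∈ transportPolytope (a + μ) (b + ν) :=
  ⟨fun i j => add_nonneg (hκ.1 i j) (hπ.1 i j),
    fun i => by simp [Finset.sum_add_distrib, hκ.2.1 i, hπ.2.1 i],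
    fun j => by simp [Finset.sum_add_distrib, hκ.2.2 j, hπ.2.2 j]⟩

theorem sub_mem (hκ : κ ∈ transportPolytope a b) (hπ : π ∈ transportPolytope μ ν)
    (hle : κ ≤ π) : π - κ ∈ transportPolytope (μ - a) (ν - b) :=
  ⟨fun i j => sub_nonneg.2 (hle i j),
    fun i => by simp [Finset.sum_sub_distrib, hκ.2.1 i, hπ.2.1 i],
    fun j => by simp [Finset.sum_sub_distrib, hκ.2.2 j, hπ.2.2 j]⟩

theorem exists_le_mem_of_le (hπ : π ∈ transportPolytope μ ν) (ha : 0 ≤ a) (haμ : a ≤ μ) :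
    ∃ b, ∃ κ ∈ transportPolytope a b, κ ≤ π := by
  have hμ := nonneg_left hπ
  refine ⟨fun j => ∑ i, a i / μ i * π i j, fun i j => a i / μ i * π i j,
    ⟨fun i j => ?_, fun i => ?_, fun j => rfl⟩, fun i j => ?_⟩
  · exact mul_nonneg (div_nonneg (ha i) (hμ i)) (hπ.1 i j)
  · rw [← Finset.mul_sum, hπ.2.1 i]
    exact div_mul_cancel_of_imp fun h => le_antisymm (h ▸ haμ i) (ha i)
  · exact mul_le_of_le_one_left (hπ.1 i j) (div_le_one_of_le₀ (haμ i) (hμ i))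

end transportPolytope

def productPlan (s : Fin m → ℝ) (r : Fin n → ℝ) : Fin m → Fin n → ℝ :=
  fun i j => s i * r j / ∑ j, r j

theorem productPlan_mem_transportPolytope {s : Fin m → ℝ} {r : Fin n → ℝ} (hs : 0 ≤ s)
    (hr : 0 ≤ r) (hsum : ∑ i, s i = ∑ j, r j) :
    productPlan s r ∈ transportPolytope s r := by
  have hR := Finset.sum_nonneg fun j (_ : j ∈ Finset.univ) => hr j
  rcases hR.eq_or_lt with hR0 | hRpos
  · have hs0 : ∀ i, s i = 0 := fun i =>
      (Finset.sum_eq_zero_iff_of_nonneg fun i _ => hs i).1 (hsum.trans hR0.symm) i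
        (Finset.mem_univ i)
    have hr0 : ∀ j, r j = 0 := fun j =>
      (Finset.sum_eq_zero_iff_of_nonneg fun j _ => hr j).1 hR0.symm j (Finset.mem_univ j)
    refine ⟨fun i j => ?_, fun i => ?_, fun j => ?_⟩ <;> simp [productPlan, hs0, hr0]
  · refine ⟨fun i j => div_nonneg (mul_nonneg (hs i) (hr j)) hR, fun i => ?_, fun j => ?_⟩
    · simp only [productPlan]
      rw [← Finset.sum_div, ← Finset.mul_sum, mul_div_cancel_right₀ _ hRpos.ne']
    · simp only [productPlan]
      rw [← Finset.sum_div, ← Finset.sum_mul, hsum,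
        mul_div_cancel_left₀ _ hRpos.ne']

/-- Keep the part `κ` of `θ` that fits under `min μ' μ` and ship the missing row mass
`μ' - min μ' μ` to the leftover column mass by a product plan. -/
theorem exists_mem_transportPolytope_dist_le {μ μ' : Fin m → ℝ} {ν : Fin n → ℝ}
    {θ : Fin m → Fin n → ℝ} (hθ : θ ∈ transportPolytope μ ν) (hμ' : 0 ≤ μ')
    (hsum : ∑ i, μ' i = ∑ i, μ i) :
    ∃ θ' ∈ transportPolytope μ' ν, dist θ' θ ≤ dist μ' μ := by
  obtain ⟨b, κ, hκ, hκθ⟩ := transportPolytope.exists_le_mem_of_le hθ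
    (le_inf hμ' (transportPolytope.nonneg_left hθ)) inf_le_right
  have hrest := transportPolytope.sub_mem hκ hθ hκθ
  have hmass : ∑ i, (μ' - μ' ⊓ μ) i = ∑ j, (ν - b) j := by
    rw [← transportPolytope.sum_left_eq_sum_right hrest]
    simp only [Pi.sub_apply, Finset.sum_sub_distrib, hsum]
  have hρ := productPlan_mem_transportPolytope (sub_nonneg.2 inf_le_left)
    (transportPolytope.nonneg_right hrest) hmass
  refine ⟨κ + productPlan (μ' - μ' ⊓ μ) (ν - b), by
    simpa using transportPolytope.add_mem hκ hρ, ?_⟩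
  refine (dist_pi_le_iff dist_nonneg).2 fun i =>
    (dist_pi_le_iff dist_nonneg).2 fun j => (le_trans ?_ (dist_le_pi_dist μ' μ i))
  have hgap : max (μ' i) (μ i) - min (μ' i) (μ i) = dist (μ' i) (μ i) :=
    (max_sub_min_eq_abs' _ _).trans (Real.dist_eq _ _).symm
  rw [Real.dist_eq, show (κ + productPlan (μ' - μ' ⊓ μ) (ν - b)) i j - θ i j
      = productPlan (μ' - μ' ⊓ μ) (ν - b) i j - (θ - κ) i j by simp; ring]
  refine abs_sub_le_of_nonneg_of_le (hρ.1 i j) ?_ (hrest.1 i j) ?_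
  · refine (transportPolytope.apply_le_left hρ i j).trans ?_
    simp only [Pi.sub_apply, Pi.inf_apply, ← hgap]
    linarith [le_max_left (μ' i) (μ i)]
  · refine (transportPolytope.apply_le_left hrest i j).trans ?_
    simp only [Pi.sub_apply, Pi.inf_apply, ← hgap]
    linarith [le_max_right (μ' i) (μ i)]

theorem isClosed_setOf_mem_transportPolytope (ν : Fin n → ℝ) :
    IsClosed {p : (Fin m → Fin n → ℝ) × (Fin m → ℝ) | p.1 ∈ transportPolytope p.2 ν} := by
  simp only [transportPolytope, Set.mem_ofPred_eq]
  simp only [Set.ofPred_and, Set.ofPred_forall]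
  exact (isClosed_iInter fun i => isClosed_iInter fun j =>
      isClosed_le continuous_const (by fun_prop)).inter
    ((isClosed_iInter fun i => isClosed_eq (by fun_prop) (by fun_prop)).inter
      (isClosed_iInter fun j => isClosed_eq (by fun_prop) continuous_const))

theorem isCompact_transportPolytope (μ : Fin m → ℝ) (ν : Fin n → ℝ) :
    IsCompact (transportPolytope μ ν) :=
  isCompact_Icc.of_isClosed_subset
    ((isClosed_setOf_mem_transportPolytope ν).preimage (continuous_id.prodMk continuous_const))
    (fun _ hπ => ⟨hπ.1, transportPolytope.apply_le_right hπ⟩ :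
      transportPolytope μ ν ⊆ Set.Icc 0 fun _ => ν)

theorem continuous_frob (c : Fin m → Fin n → ℝ) : Continuous (frob c) := by
  unfold frob
  fun_prop

theorem exists_solvesH_of_nonempty {μ : Fin m → ℝ} {ν : Fin n → ℝ}
    (h : (transportPolytope μ ν).Nonempty) (c : Fin m → Fin n → ℝ) : ∃ π, SolvesH μ ν c π :=
  let ⟨π, hπ, hmin⟩ := (isCompact_transportPolytope μ ν).exists_isMinOn h
    (continuous_frob c).continuousOn
  ⟨π, hπ, fun _ hθ => hmin hθ⟩

theorem isClosed_bilevelFeas (μ2 : Fin n → ℝ) (c : Fin m → Fin n → ℝ) :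
    IsClosed (bilevelFeas μ2 c) := by
  have hclosed : IsClosed {p : (Fin m → Fin n → ℝ) × (Fin m → ℝ) |
      0 ≤ p.2 ∧ ∑ i, p.2 i = ∑ j, μ2 j ∧ p.1 ∈ transportPolytope p.2 μ2} :=
    (isClosed_le continuous_const continuous_snd).inter
      ((isClosed_eq (by fun_prop) continuous_const).inter
        (isClosed_setOf_mem_transportPolytope μ2))
  refine IsSeqClosed.isClosed fun x p hx hlim => ?_
  obtain ⟨hp0, hpsum, hpπ⟩ := hclosed.mem_of_tendsto hlim
    (.of_forall fun k => ⟨(hx k).1, (hx k).2.1, (hx k).2.2.1⟩)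
  refine ⟨hp0, hpsum, hpπ, fun θ hθ => ?_⟩
  choose θs hθs hdist using fun k =>
    exists_mem_transportPolytope_dist_le hθ (hx k).1 ((hx k).2.1.trans hpsum.symm)
  have hθlim : Tendsto θs atTop (𝓝 θ) :=
    tendsto_iff_dist_tendsto_zero.2 <| squeeze_zero (fun _ => dist_nonneg) hdist <|
      tendsto_iff_dist_tendsto_zero.1 ((continuous_snd.tendsto p).comp hlim)
  exact le_of_tendsto_of_tendsto'
    ((continuous_frob c).continuousAt.tendsto.comp ((continuous_fst.tendsto p).comp hlim))
    ((continuous_frob c).continuousAt.tendsto.comp hθlim) fun k => (hx k).2.2.2 _ (hθs k)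

theorem isCompact_bilevelFeas (μ2 : Fin n → ℝ) (c : Fin m → Fin n → ℝ) :
    IsCompact (bilevelFeas μ2 c) := by
  refine isCompact_Icc.of_isClosed_subset (isClosed_bilevelFeas μ2 c)
    (fun p ⟨hp0, hpsum, hpπ, _⟩ => ?_ :
      bilevelFeas μ2 c ⊆ Set.Icc 0 ((fun _ => μ2), fun _ => ∑ j, μ2 j))
  exact ⟨⟨hpπ.1, hp0⟩, transportPolytope.apply_le_right hpπ,
    fun i => hpsum ▸ Finset.single_le_sum (fun i _ => hp0 i) (Finset.mem_univ i)⟩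

theorem bilevelFeas_nonempty (hm : 0 < m) {μ2 : Fin n → ℝ} (hμ2 : 0 ≤ μ2)
    (c : Fin m → Fin n → ℝ) : (bilevelFeas μ2 c).Nonempty := by
  set μ1 : Fin m → ℝ := Pi.single ⟨0, hm⟩ (∑ j, μ2 j)
  have hμ1 : 0 ≤ μ1 := Pi.single_nonneg.2 (Finset.sum_nonneg fun j _ => hμ2 j)
  have hsum : ∑ i, μ1 i = ∑ j, μ2 j :=
    (Finset.sum_pi_single' _ _ _).trans (if_pos (Finset.mem_univ _))
  obtain ⟨π, hπ⟩ := exists_solvesH_of_nonempty ⟨_, productPlan_mem_transportPolytope hμ1 hμ2 hsum⟩ c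
  exact ⟨(π, μ1), hμ1, hsum, hπ⟩

theorem bilevel_hitchcock_has_solution_general (n1 n2 : ℕ) (hn1 : 0 < n1)
    (J : (Fin n1 → Fin n2 → ℝ) × (Fin n1 → ℝ) → ℝ) (hJ : LowerSemicontinuous J)
    (μ2d : Fin n2 → ℝ) (hμ2d : ∀ j, 0 ≤ μ2d j) (cd : Fin n1 → Fin n2 → ℝ) :
    ∃ p ∈ bilevelFeas μ2d cd, ∀ q ∈ bilevelFeas μ2d cd, J p ≤ J q :=
  (hJ.lowerSemicontinuousOn _).exists_isMinOn (bilevelFeas_nonempty hn1 hμ2d cd)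
    (isCompact_bilevelFeas μ2d cd)

/-- The bilevel Hitchcock problem has at least one optimal solution. -/
theorem bilevel_hitchcock_has_solution (n1 n2 : ℕ) (hn1 : 0 < n1) (hn2 : 0 < n2)
    (J : (Fin n1 → Fin n2 → ℝ) × (Fin n1 → ℝ) → ℝ) (hJ : LowerSemicontinuous J)
    (μ2d : Fin n2 → ℝ) (hμ2d : ∀ j, 0 ≤ μ2d j) (cd : Fin n1 → Fin n2 → ℝ) :
    ∃ p ∈ bilevelFeas μ2d cd, ∀ q ∈ bilevelFeas μ2d cd, J p ≤ J q :=
  bilevel_hitchcock_has_solution_general n1 n2 hn1 J hJ μ2d hμ2d cd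
end
end

section
/- Let n1, n2 be positive integers, let γ > 0, let μ1 ∈ ℝ^{n1} and μ2 ∈ ℝ^{n2} satisfy μ1 ≥ 0 and μ2 ≥ 0 componentwise and Σ_i μ1_i = Σ_j μ2_j, and let c ∈ ℝ^{n1×n2}. Define Φ(α1, α2) := ⟨α1, μ1⟩ + ⟨α2, μ2⟩ − (1/(2γ)) ‖(α1 ⊕ α2 − c)_+‖_F² on ℝ^{n1} × ℝ^{n2}. Then: (i) Φ attains its maximum over ℝ^{n1} × ℝ^{n2}; and (ii) strong duality holds: the maximum of Φ over ℝ^{n1} × ℝ^{n2} equals the minimum of θ ↦ ⟨c, θ⟩_F + (γ/2)‖θ‖_F² over Π(μ1, μ2). -/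
/-!
For fixed `α2` the dual objective `Φ` splits into one-dimensional concave problems in the
coordinates `α1 i`; each is linear with slope `μ1 i ≥ 0` to the left of
`m i = min_j (c i j - α2 j)` and nonincreasing to the right of `m i + γ μ1 i`, so clamping into
that interval does not decrease `Φ`, and likewise for `α2`. Since `Φ` is invariant under
`(α1, α2) ↦ (α1 - s, α2 + s)`, clamping both sides and normalizing the shift dominates every point
by one in a fixed ball, where the continuous `Φ` attains its maximum.

At a maximizer the first-order conditions say that `π = (α1 ⊕ α2 - c)_+ / γ` has marginals
`μ1, μ2`. For `θ ∈ Π(μ1, μ2)` the duality gap is a sum of Young gaps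
`x_+² / (2γ) + γ θ² / 2 - x θ ≥ 0`, all of which vanish at `θ = π`.
-/

noncomputable section

/-- The dual objective Φ(α1, α2). -/
def dualObj {n1 n2 : ℕ} (γ : ℝ) (μ1 : Fin n1 → ℝ) (μ2 : Fin n2 → ℝ)
    (c : Fin n1 → Fin n2 → ℝ) (α : (Fin n1 → ℝ) × (Fin n2 → ℝ)) : ℝ :=
  (∑ i, α.1 i * μ1 i) + (∑ j, α.2 j * μ2 j) -
    (1 / (2 * γ)) * ∑ i, ∑ j, (max (α.1 i + α.2 j - c i j) 0) ^ 2

/-- The primal objective of the regularized Hitchcock problem. -/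
def primalObj {n1 n2 : ℕ} (γ : ℝ) (c θ : Fin n1 → Fin n2 → ℝ) : ℝ :=
  frob c θ + γ / 2 * frob θ θ

open Finset Metric

lemma mul_max_zero_self (x : ℝ) : x * max x 0 = max x 0 ^ 2 := by
  rcases le_total x 0 with hx | hx
  · simp [max_eq_right hx]
  · rw [max_eq_left hx, sq]

lemma sq_max_zero_add_le (x t : ℝ) :
    max (x + t) 0 ^ 2 ≤ max x 0 ^ 2 + 2 * max x 0 * t + t ^ 2 := by
  rcases le_total (x + t) 0 with hxt | hxt
  · rw [max_eq_right hxt]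
    nlinarith [sq_nonneg (max x 0 + t), le_max_left x 0, le_max_right x 0]
  · rw [max_eq_left hxt]
    rcases le_total x 0 with hx | hx
    · rw [max_eq_right hx]; nlinarith
    · rw [max_eq_left hx]; nlinarith

lemma le_sq_max_zero_add (x t : ℝ) :
    max x 0 ^ 2 + 2 * max x 0 * t ≤ max (x + t) 0 ^ 2 := by
  rcases le_total x 0 with hx | hx
  · rw [max_eq_right hx]
    nlinarith [sq_nonneg (max (x + t) 0)]
  · rw [max_eq_left hx]
    rcases le_total (x + t) 0 with hxt | hxt
    · rw [max_eq_right hxt]; nlinarith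
    · rw [max_eq_left hxt]; nlinarith [sq_nonneg t]

lemma eq_zero_of_forall_mul_le_mul_sq {a K : ℝ} (h : ∀ t, a * t ≤ K * t ^ 2) : a = 0 := by
  set L := |K| + 1
  have hL : 0 < L := by positivity
  have ht : a * (a / (2 * L)) ≤ L * (a / (2 * L)) ^ 2 := (h _).trans
    (mul_le_mul_of_nonneg_right (by linarith [le_abs_self K]) (sq_nonneg _))
  have hsq : a ^ 2 ≤ 0 := by
    field_simp at ht
    nlinarith
  exact pow_eq_zero_iff two_ne_zero |>.1 (le_antisymm hsq (sq_nonneg a))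

lemma mul_le_max_zero_sq_add_sq {γ : ℝ} (hγ : 0 < γ) (x : ℝ) {t : ℝ} (ht : 0 ≤ t) :
    x * t ≤ 1 / (2 * γ) * max x 0 ^ 2 + γ / 2 * t ^ 2 := by
  have hamgm : max x 0 * t ≤ 1 / (2 * γ) * max x 0 ^ 2 + γ / 2 * t ^ 2 := by
    have : 0 ≤ 1 / (2 * γ) * (max x 0 - γ * t) ^ 2 := by positivity
    have e : 1 / (2 * γ) * (max x 0 - γ * t) ^ 2
        = 1 / (2 * γ) * max x 0 ^ 2 + γ / 2 * t ^ 2 - max x 0 * t := by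
      field_simp; ring
    linarith
  exact (mul_le_mul_of_nonneg_right (le_max_left x 0) ht).trans hamgm

lemma mul_max_zero_div_eq {γ : ℝ} (hγ : γ ≠ 0) (x : ℝ) :
    x * (max x 0 / γ) = 1 / (2 * γ) * max x 0 ^ 2 + γ / 2 * (max x 0 / γ) ^ 2 := by
  rw [← mul_div_assoc, mul_max_zero_self]
  field_simp
  ring

lemma le_of_forall_sum_le_sum {ι α : Type*} [Fintype ι] [DecidableEq ι] (f : ι → α → ℝ)
    (x : ι → α) (h : ∀ y : ι → α, ∑ k, f k (y k) ≤ ∑ k, f k (x k)) (i : ι) (a : α) :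
    f i a ≤ f i (x i) := by
  have := h (Function.update x i a)
  rw [Fintype.sum_eq_add_sum_compl i, Fintype.sum_eq_add_sum_compl i (fun k => f k (x k)),
    Function.update_self, sum_congr rfl fun k hk => by
      rw [Function.update_of_ne (by simpa using hk)]] at this
  linarith

section CoordObj

variable {ι : Type*} [Fintype ι] {γ μ : ℝ} {b d : ι → ℝ}

/-- The dual objective as a function of the single potential `a` of one row (or column), the
potentials `b` of the other side being fixed and `d` the matching row of costs. -/
def coordObj (γ μ : ℝ) (b d : ι → ℝ) (a : ℝ) : ℝ :=
  a * μ - 1 / (2 * γ) * ∑ k, max (a + b k - d k) 0 ^ 2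

lemma coordObj_eq_mul_of_forall_le_zero {a : ℝ} (h : ∀ k, a + b k - d k ≤ 0) :
    coordObj γ μ b d a = a * μ := by
  simp [coordObj, max_eq_right (h _)]

lemma coordObj_le_of_le (hγ : 0 < γ) {a a' : ℝ} (ha : a ≤ a')
    (hsum : γ * μ ≤ ∑ k, max (a + b k - d k) 0) :
    coordObj γ μ b d a' ≤ coordObj γ μ b d a := by
  have hconvex : ∑ k, max (a + b k - d k) 0 ^ 2 + 2 * (a' - a) * (γ * μ) ≤
      ∑ k, max (a' + b k - d k) 0 ^ 2 :=
    calc _ ≤ ∑ k, max (a + b k - d k) 0 ^ 2 + 2 * (a' - a) * ∑ k, max (a + b k - d k) 0 := by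
          gcongr
      _ = ∑ k, (max (a + b k - d k) 0 ^ 2 + 2 * max (a + b k - d k) 0 * (a' - a)) := by
          rw [sum_add_distrib, mul_sum]; congr 1; exact sum_congr rfl fun k _ => by ring
      _ ≤ _ := sum_le_sum fun k _ => by
          have := le_sq_max_zero_add (a + b k - d k) (a' - a)
          rwa [show a + b k - d k + (a' - a) = a' + b k - d k by ring] at this
  have hscale : 1 / (2 * γ) * (2 * (a' - a) * (γ * μ)) = (a' - a) * μ := by field_simp
  have := mul_le_mul_of_nonneg_left hconvex (by positivity : (0 : ℝ) ≤ 1 / (2 * γ))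
  rw [mul_add, hscale] at this
  unfold coordObj
  linarith

/-- Moving `a` into the interval `[m, m + γ μ]`, with `m = min_k (d k - b k)`, does not decrease
`coordObj`: below `m` it is linear with slope `μ ≥ 0`, above `m + γ μ` it is nonincreasing. -/
lemma exists_coordObj_le_of_nonneg [Nonempty ι] (hγ : 0 < γ) (hμ : 0 ≤ μ) (b d : ι → ℝ)
    (a : ℝ) : ∃ a', coordObj γ μ b d a ≤ coordObj γ μ b d a' ∧
      (∀ k, a' + b k - d k ≤ γ * μ) ∧ ∃ k, 0 ≤ a' + b k - d k := by
  obtain ⟨k₀, hk₀⟩ := Finite.exists_min fun k => d k - b k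
  set m := d k₀ - b k₀
  have hm : ∀ k, m + b k - d k ≤ 0 := fun k => by linarith [hk₀ k]
  have hγμ : 0 ≤ γ * μ := mul_nonneg hγ.le hμ
  suffices ∃ a' ∈ Set.Icc m (m + γ * μ), coordObj γ μ b d a ≤ coordObj γ μ b d a' by
    obtain ⟨a', ⟨hma', ha'm⟩, hle⟩ := this
    exact ⟨a', hle, fun k => by linarith [hm k], k₀, by linarith⟩
  rcases le_total a m with ham | hma
  · refine ⟨m, ⟨le_rfl, by linarith⟩, ?_⟩
    rw [coordObj_eq_mul_of_forall_le_zero hm,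
      coordObj_eq_mul_of_forall_le_zero fun k => by linarith [hm k]]
    exact mul_le_mul_of_nonneg_right ham hμ
  rcases le_total a (m + γ * μ) with ham' | hma'
  · exact ⟨a, ⟨hma, ham'⟩, le_rfl⟩
  refine ⟨m + γ * μ, ⟨by linarith, le_rfl⟩, coordObj_le_of_le hγ hma' ?_⟩
  calc γ * μ = max (m + γ * μ + b k₀ - d k₀) 0 := by
        rw [show m + γ * μ + b k₀ - d k₀ = γ * μ by ring, max_eq_left hγμ]
    _ ≤ _ := single_le_sum (f := fun k => max (m + γ * μ + b k - d k) 0)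
        (fun k _ => le_max_right _ _) (mem_univ k₀)

lemma sum_max_zero_eq_of_forall_coordObj_le (hγ : 0 < γ) {a : ℝ}
    (h : ∀ a', coordObj γ μ b d a' ≤ coordObj γ μ b d a) :
    ∑ k, max (a + b k - d k) 0 = γ * μ := by
  set S := ∑ k, max (a + b k - d k) 0
  have hquad : ∀ t, (μ - S / γ) * t ≤ Fintype.card ι / (2 * γ) * t ^ 2 := by
    intro t
    have hsq : ∑ k, max (a + t + b k - d k) 0 ^ 2 ≤
        ∑ k, max (a + b k - d k) 0 ^ 2 + 2 * t * S + Fintype.card ι * t ^ 2 :=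
      calc _ ≤ ∑ k, (max (a + b k - d k) 0 ^ 2 + 2 * max (a + b k - d k) 0 * t + t ^ 2) :=
            sum_le_sum fun k _ => by
              have := sq_max_zero_add_le (a + b k - d k) t
              rwa [show a + b k - d k + t = a + t + b k - d k by ring] at this
        _ = _ := by
            simp only [sum_add_distrib, ← sum_mul, ← mul_sum, sum_const, card_univ,
              nsmul_eq_mul]
            ring
    have := mul_le_mul_of_nonneg_left hsq (by positivity : (0 : ℝ) ≤ 1 / (2 * γ))
    have e1 : S / γ * t = 1 / (2 * γ) * (2 * t * S) := by field_simp
    have e2 : Fintype.card ι / (2 * γ) * t ^ 2 = 1 / (2 * γ) * (Fintype.card ι * t ^ 2) := by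
      field_simp
    have h' := h (a + t)
    unfold coordObj at h'
    linarith
  have := eq_zero_of_forall_mul_le_mul_sq hquad
  field_simp at this
  linarith

end CoordObj

section Transport

variable {n1 n2 : ℕ} {γ : ℝ} {μ1 : Fin n1 → ℝ} {μ2 : Fin n2 → ℝ} {c θ : Fin n1 → Fin n2 → ℝ}

lemma dualObj_eq_sum_coordObj (α1 : Fin n1 → ℝ) (α2 : Fin n2 → ℝ) :
    dualObj γ μ1 μ2 c (α1, α2) =
      ∑ j, α2 j * μ2 j + ∑ i, coordObj γ (μ1 i) α2 (c i) (α1 i) := by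
  simp only [dualObj, coordObj, sum_sub_distrib, ← mul_sum]
  ring

lemma dualObj_swap (α1 : Fin n1 → ℝ) (α2 : Fin n2 → ℝ) :
    dualObj γ μ1 μ2 c (α1, α2) = dualObj γ μ2 μ1 (Function.swap c) (α2, α1) := by
  simp only [dualObj, Function.swap, add_comm (α2 _)]
  rw [sum_comm (f := fun i j => max (α1 i + α2 j - c i j) 0 ^ 2)]
  ring

lemma dualObj_shift (hmass : ∑ i, μ1 i = ∑ j, μ2 j) (α1 : Fin n1 → ℝ) (α2 : Fin n2 → ℝ)
    (s : ℝ) :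
    dualObj γ μ1 μ2 c (fun i => α1 i - s, fun j => α2 j + s) = dualObj γ μ1 μ2 c (α1, α2) := by
  have hcancel : ∀ i j, α1 i - s + (α2 j + s) - c i j = α1 i + α2 j - c i j := fun _ _ => by ring
  simp only [dualObj, hcancel, sub_mul, add_mul, sum_sub_distrib, sum_add_distrib, ← mul_sum,
    hmass]
  ring

lemma continuous_dualObj : Continuous (dualObj γ μ1 μ2 c) := by
  unfold dualObj
  fun_prop

lemma exists_dualObj_le_update_fst [Nonempty (Fin n2)] (hγ : 0 < γ) (hμ1 : ∀ i, 0 ≤ μ1 i)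
    (α1 : Fin n1 → ℝ) (α2 : Fin n2 → ℝ) :
    ∃ u, dualObj γ μ1 μ2 c (α1, α2) ≤ dualObj γ μ1 μ2 c (u, α2) ∧
      ∀ i, (∀ j, u i + α2 j - c i j ≤ γ * μ1 i) ∧ ∃ j, 0 ≤ u i + α2 j - c i j := by
  choose u hu using fun i => exists_coordObj_le_of_nonneg hγ (hμ1 i) α2 (c i) (α1 i)
  refine ⟨u, ?_, fun i => (hu i).2⟩
  rw [dualObj_eq_sum_coordObj, dualObj_eq_sum_coordObj]
  gcongr with i
  exact (hu i).1

lemma exists_dualObj_le_update_snd [Nonempty (Fin n1)] (hγ : 0 < γ) (hμ2 : ∀ j, 0 ≤ μ2 j)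
    (α1 : Fin n1 → ℝ) (α2 : Fin n2 → ℝ) :
    ∃ v, dualObj γ μ1 μ2 c (α1, α2) ≤ dualObj γ μ1 μ2 c (α1, v) ∧
      ∀ j, (∀ i, α1 i + v j - c i j ≤ γ * μ2 j) ∧ ∃ i, 0 ≤ α1 i + v j - c i j := by
  obtain ⟨v, hle, hv⟩ :=
    exists_dualObj_le_update_fst (μ2 := μ1) (c := Function.swap c) hγ hμ2 α2 α1
  refine ⟨v, by simpa only [← dualObj_swap] using hle, fun j => ⟨fun i => ?_, ?_⟩⟩
  · simpa only [Function.swap, add_comm] using (hv j).1 i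
  · obtain ⟨i, hi⟩ := (hv j).2
    exact ⟨i, by simpa only [Function.swap, add_comm] using hi⟩

lemma sum_max_zero_eq_of_forall_dualObj_le_fst (hγ : 0 < γ) {α : (Fin n1 → ℝ) × (Fin n2 → ℝ)}
    (hα : ∀ β, dualObj γ μ1 μ2 c β ≤ dualObj γ μ1 μ2 c α) (i : Fin n1) :
    ∑ j, max (α.1 i + α.2 j - c i j) 0 = γ * μ1 i := by
  obtain ⟨α1, α2⟩ := α
  refine sum_max_zero_eq_of_forall_coordObj_le hγ fun a => ?_
  refine le_of_forall_sum_le_sum (fun k => coordObj γ (μ1 k) α2 (c k)) α1 (fun y => ?_) i a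
  have := hα (y, α2)
  rwa [dualObj_eq_sum_coordObj, dualObj_eq_sum_coordObj, add_le_add_iff_left] at this

lemma sum_max_zero_eq_of_forall_dualObj_le_snd (hγ : 0 < γ) {α : (Fin n1 → ℝ) × (Fin n2 → ℝ)}
    (hα : ∀ β, dualObj γ μ1 μ2 c β ≤ dualObj γ μ1 μ2 c α) (j : Fin n2) :
    ∑ i, max (α.1 i + α.2 j - c i j) 0 = γ * μ2 j := by
  obtain ⟨α1, α2⟩ := α
  have hswap : ∀ β, dualObj γ μ2 μ1 (Function.swap c) β ≤
      dualObj γ μ2 μ1 (Function.swap c) (α2, α1) := fun ⟨β2, β1⟩ => by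
    have := hα (β1, β2)
    rwa [dualObj_swap β1, dualObj_swap α1] at this
  simpa only [Function.swap, add_comm] using sum_max_zero_eq_of_forall_dualObj_le_fst hγ hswap j

lemma shift_mem_closedBall (hγ : 0 ≤ γ) {u : Fin n1 → ℝ} {v w : Fin n2 → ℝ}
    (hu : ∀ i, (∀ j, u i + v j - c i j ≤ γ * μ1 i) ∧ ∃ j, 0 ≤ u i + v j - c i j)
    (hw : ∀ j, (∀ i, u i + w j - c i j ≤ γ * μ2 j) ∧ ∃ i, 0 ≤ u i + w j - c i j)
    (i₀ : Fin n1) :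
    ((fun i => u i - u i₀, fun j => w j + u i₀) : (Fin n1 → ℝ) × (Fin n2 → ℝ)) ∈
      closedBall 0 (γ * (‖μ1‖ + ‖μ2‖) + 3 * ‖c‖) := by
  have hc : ∀ i j, |c i j| ≤ ‖c‖ := fun i j =>
    (norm_le_pi_norm (c i) j).trans (norm_le_pi_norm c i)
  have hμ1 : ∀ i, γ * μ1 i ≤ γ * ‖μ1‖ := fun i =>
    mul_le_mul_of_nonneg_left ((le_abs_self _).trans (norm_le_pi_norm μ1 i)) hγ
  have hμ2 : ∀ j, γ * μ2 j ≤ γ * ‖μ2‖ := fun j =>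
    mul_le_mul_of_nonneg_left ((le_abs_self _).trans (norm_le_pi_norm μ2 j)) hγ
  have hdiff : ∀ i i', u i - u i' ≤ γ * ‖μ1‖ + 2 * ‖c‖ := fun i i' => by
    obtain ⟨j, hj⟩ := (hu i').2
    linarith [(hu i).1 j, abs_le.1 (hc i j), abs_le.1 (hc i' j), hμ1 i]
  have hγμ1 : 0 ≤ γ * ‖μ1‖ := by positivity
  have hγμ2 : 0 ≤ γ * ‖μ2‖ := by positivity
  have hR : 0 ≤ γ * (‖μ1‖ + ‖μ2‖) + 3 * ‖c‖ := by positivity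
  rw [mem_closedBall_zero_iff, norm_prod_le_iff, pi_norm_le_iff_of_nonneg hR,
    pi_norm_le_iff_of_nonneg hR]
  refine ⟨fun i => ?_, fun j => ?_⟩
  · rw [Real.norm_eq_abs, abs_le]
    constructor <;> linarith [hdiff i i₀, hdiff i₀ i, norm_nonneg c]
  · obtain ⟨i, hi⟩ := (hw j).2
    rw [Real.norm_eq_abs, abs_le]
    constructor <;>
      linarith [(hw j).1 i₀, hdiff i i₀, abs_le.1 (hc i j), abs_le.1 (hc i₀ j), hμ2 j]

lemma exists_mem_closedBall_dualObj_le [Nonempty (Fin n1)] [Nonempty (Fin n2)] (hγ : 0 < γ)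
    (hμ1 : ∀ i, 0 ≤ μ1 i) (hμ2 : ∀ j, 0 ≤ μ2 j) (hmass : ∑ i, μ1 i = ∑ j, μ2 j)
    (β : (Fin n1 → ℝ) × (Fin n2 → ℝ)) :
    ∃ α ∈ closedBall 0 (γ * (‖μ1‖ + ‖μ2‖) + 3 * ‖c‖),
      dualObj γ μ1 μ2 c β ≤ dualObj γ μ1 μ2 c α := by
  obtain ⟨u, hβu, hu⟩ := exists_dualObj_le_update_fst hγ hμ1 β.1 β.2
  obtain ⟨w, huw, hw⟩ := exists_dualObj_le_update_snd hγ hμ2 u β.2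
  obtain ⟨i₀⟩ := ‹Nonempty (Fin n1)›
  refine ⟨_, shift_mem_closedBall hγ.le hu hw i₀, ?_⟩
  rw [dualObj_shift hmass]
  exact hβu.trans huw

theorem exists_forall_dualObj_le [Nonempty (Fin n1)] [Nonempty (Fin n2)] (hγ : 0 < γ)
    (hμ1 : ∀ i, 0 ≤ μ1 i) (hμ2 : ∀ j, 0 ≤ μ2 j) (hmass : ∑ i, μ1 i = ∑ j, μ2 j) :
    ∃ α, ∀ β, dualObj γ μ1 μ2 c β ≤ dualObj γ μ1 μ2 c α := by
  have hR : 0 ≤ γ * (‖μ1‖ + ‖μ2‖) + 3 * ‖c‖ := by positivity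
  obtain ⟨α, -, hα⟩ := (isCompact_closedBall (0 : (Fin n1 → ℝ) × (Fin n2 → ℝ)) _).exists_isMaxOn
    (nonempty_closedBall.2 hR) continuous_dualObj.continuousOn
  refine ⟨α, fun β => ?_⟩
  obtain ⟨α', hα', hle⟩ := exists_mem_closedBall_dualObj_le (c := c) hγ hμ1 hμ2 hmass β
  exact hle.trans (hα hα')

lemma primalObj_sub_dualObj (hrow : ∀ i, ∑ j, θ i j = μ1 i) (hcol : ∀ j, ∑ i, θ i j = μ2 j)
    (β : (Fin n1 → ℝ) × (Fin n2 → ℝ)) :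
    primalObj γ c θ - dualObj γ μ1 μ2 c β =
      ∑ i, ∑ j, (1 / (2 * γ) * max (β.1 i + β.2 j - c i j) 0 ^ 2 + γ / 2 * θ i j ^ 2 -
        (β.1 i + β.2 j - c i j) * θ i j) := by
  have h1 : ∑ i, β.1 i * μ1 i = ∑ i, ∑ j, β.1 i * θ i j := by simp_rw [← mul_sum, hrow]
  have h2 : ∑ j, β.2 j * μ2 j = ∑ i, ∑ j, β.2 j * θ i j := by
    rw [sum_comm]; simp_rw [← mul_sum, hcol]
  rw [primalObj, dualObj, frob, frob, h1, h2]
  simp only [mul_sum, ← sum_add_distrib, ← sum_sub_distrib]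
  exact sum_congr rfl fun i _ => sum_congr rfl fun j _ => by ring

lemma dualObj_le_primalObj (hγ : 0 < γ) (hθ : θ ∈ transportPolytope μ1 μ2)
    (β : (Fin n1 → ℝ) × (Fin n2 → ℝ)) : dualObj γ μ1 μ2 c β ≤ primalObj γ c θ := by
  obtain ⟨hnonneg, hrow, hcol⟩ := hθ
  rw [← sub_nonneg, primalObj_sub_dualObj hrow hcol]
  exact sum_nonneg fun i _ => sum_nonneg fun j _ =>
    sub_nonneg.2 (mul_le_max_zero_sq_add_sq hγ _ (hnonneg i j))

/-- The plan `(α1 ⊕ α2 - c)_+ / γ`: the `θ` for which every Young gap in `primalObj_sub_dualObj`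
vanishes. -/
def planOfPotentials (γ : ℝ) (c : Fin n1 → Fin n2 → ℝ) (α : (Fin n1 → ℝ) × (Fin n2 → ℝ)) :
    Fin n1 → Fin n2 → ℝ :=
  fun i j => max (α.1 i + α.2 j - c i j) 0 / γ

lemma planOfPotentials_mem_transportPolytope (hγ : 0 < γ) {α : (Fin n1 → ℝ) × (Fin n2 → ℝ)}
    (hα : ∀ β, dualObj γ μ1 μ2 c β ≤ dualObj γ μ1 μ2 c α) :
    planOfPotentials γ c α ∈ transportPolytope μ1 μ2 := by
  refine ⟨fun i j => div_nonneg (le_max_right _ _) hγ.le, fun i => ?_, fun j => ?_⟩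
  · simp only [planOfPotentials, ← sum_div]
    rw [sum_max_zero_eq_of_forall_dualObj_le_fst hγ hα, mul_div_cancel_left₀ _ hγ.ne']
  · simp only [planOfPotentials, ← sum_div]
    rw [sum_max_zero_eq_of_forall_dualObj_le_snd hγ hα, mul_div_cancel_left₀ _ hγ.ne']

lemma dualObj_eq_primalObj_planOfPotentials (hγ : γ ≠ 0) {α : (Fin n1 → ℝ) × (Fin n2 → ℝ)}
    (hπ : planOfPotentials γ c α ∈ transportPolytope μ1 μ2) :
    dualObj γ μ1 μ2 c α = primalObj γ c (planOfPotentials γ c α) := by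
  rw [eq_comm, ← sub_eq_zero, primalObj_sub_dualObj hπ.2.1 hπ.2.2]
  exact sum_eq_zero fun i _ => sum_eq_zero fun j _ =>
    sub_eq_zero.2 (mul_max_zero_div_eq hγ _).symm

end Transport

/-- The dual of the regularized Hitchcock problem attains its maximum and
strong duality holds. -/
theorem regularized_hitchcock_strong_duality (n1 n2 : ℕ) (hn1 : 0 < n1) (hn2 : 0 < n2)
    (γ : ℝ) (hγ : 0 < γ)
    (μ1 : Fin n1 → ℝ) (μ2 : Fin n2 → ℝ) (c : Fin n1 → Fin n2 → ℝ)
    (hμ1 : ∀ i, 0 ≤ μ1 i) (hμ2 : ∀ j, 0 ≤ μ2 j)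
    (hmass : (∑ i, μ1 i) = ∑ j, μ2 j) :
    ∃ α : (Fin n1 → ℝ) × (Fin n2 → ℝ),
      (∀ β : (Fin n1 → ℝ) × (Fin n2 → ℝ), dualObj γ μ1 μ2 c β ≤ dualObj γ μ1 μ2 c α) ∧
      ∃ π ∈ transportPolytope μ1 μ2,
        (∀ θ ∈ transportPolytope μ1 μ2, primalObj γ c π ≤ primalObj γ c θ) ∧
        dualObj γ μ1 μ2 c α = primalObj γ c π := by
  have := Fin.pos_iff_nonempty.mp hn1
  have := Fin.pos_iff_nonempty.mp hn2
  obtain ⟨α, hα⟩ := exists_forall_dualObj_le (c := c) hγ hμ1 hμ2 hmass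
  have hπ := planOfPotentials_mem_transportPolytope hγ hα
  have hgap := dualObj_eq_primalObj_planOfPotentials hγ.ne' hπ
  exact ⟨α, hα, _, hπ, fun θ hθ => hgap ▸ dualObj_le_primalObj hγ hθ α, hgap⟩
end
end

section
/- Let n1, n2 be positive integers, let γ > 0 and ε > 0, and let c ∈ ℝ^{n1×n2}. Then for every μ1 ∈ ℝ^{n1} and μ2 ∈ ℝ^{n2} (with no sign or mass restriction on μ1, μ2), there exists exactly one pair (α1, α2) ∈ ℝ^{n1} × ℝ^{n2} satisfying the regularized dual system: Σ_j max((α1)_i + (α2)_j − c_{ij}, 0) + γ ε (α1)_i = γ (μ1)_i for all i = 1,…,n1, and Σ_i max((α1)_i + (α2)_j − c_{ij}, 0) + γ ε (α2)_j = γ (μ2)_j for all j = 1,…,n2. -/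
/-!
The left-hand side of the system is `dualMap (γ * ε) c α = marginals (plan c α) + (γ * ε) • α`,
where `plan c α i j = max (α₁ i + α₂ j - c i j) 0`. Monotonicity of `max · 0` makes this map
strongly monotone for the pairing `dot`, hence injective. It is also the gradient of the potential
`∑ ½ max (α₁ i + α₂ j - c i j) 0 ^ 2 + (γε/2)|α|² - ⟨γμ, α⟩`, which grows quadratically at
infinity, so a global minimiser exists and solves the system.
-/

noncomputable section

/-- The regularized dual system (for parameters γ, ε and cost c) associated with data
(μ1, μ2), in the unknowns (α1, α2). -/
def DualSys {n1 n2 : ℕ} (γ ε : ℝ) (c : Fin n1 → Fin n2 → ℝ)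
    (μ1 : Fin n1 → ℝ) (μ2 : Fin n2 → ℝ) (α1 : Fin n1 → ℝ) (α2 : Fin n2 → ℝ) : Prop :=
  (∀ i, (∑ j, max (α1 i + α2 j - c i j) 0) + γ * ε * α1 i = γ * μ1 i) ∧
  (∀ j, (∑ i, max (α1 i + α2 j - c i j) 0) + γ * ε * α2 j = γ * μ2 j)

namespace RegularizedDual

open Filter Topology

def halfSqPos (x : ℝ) : ℝ := max x 0 ^ 2 / 2

lemma halfSqPos_nonneg (x : ℝ) : 0 ≤ halfSqPos x := by unfold halfSqPos; positivity

lemma abs_halfSqPos_sub_sub_le (x y : ℝ) :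
    |halfSqPos y - halfSqPos x - (y - x) * max x 0| ≤ (y - x) ^ 2 / 2 := by
  unfold halfSqPos
  rw [abs_le]
  rcases le_total x 0 with hx | hx <;> rcases le_total y 0 with hy | hy <;>
    simp only [max_eq_left, max_eq_right, hx, hy] <;> constructor <;> nlinarith

lemma hasDerivAt_halfSqPos (x : ℝ) : HasDerivAt halfSqPos (max x 0) x := by
  rw [hasDerivAt_iff_isLittleO]
  have hsq : (fun y => (y - x) ^ 2) =o[𝓝 x] fun y => y - x :=
    (Asymptotics.isLittleO_pow_id one_lt_two).comp_tendsto
      (tendsto_sub_nhds_zero_iff.2 tendsto_id)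
  refine Asymptotics.IsBigO.trans_isLittleO (Asymptotics.IsBigO.of_bound (1 / 2) ?_) hsq
  filter_upwards with y
  simpa [abs_of_nonneg (sq_nonneg (y - x)), div_eq_inv_mul] using abs_halfSqPos_sub_sub_le x y

@[fun_prop]
lemma continuous_halfSqPos : Continuous halfSqPos :=
  continuous_iff_continuousAt.2 fun x => (hasDerivAt_halfSqPos x).continuousAt

lemma max_zero_sub_mul_sub_nonneg (u v : ℝ) : 0 ≤ (max u 0 - max v 0) * (u - v) := by
  rcases le_total u 0 with hu | hu <;> rcases le_total v 0 with hv | hv <;>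
    simp only [max_eq_left, max_eq_right, hu, hv] <;> nlinarith

variable {ι κ : Type*} [Fintype ι] [Fintype κ]

def dot (x y : (ι → ℝ) × (κ → ℝ)) : ℝ := x.1 ⬝ᵥ y.1 + x.2 ⬝ᵥ y.2

lemma dot_comm (x y : (ι → ℝ) × (κ → ℝ)) : dot x y = dot y x := by
  simp only [dot, dotProduct_comm]

lemma dot_add_left (x y z : (ι → ℝ) × (κ → ℝ)) : dot (x + y) z = dot x z + dot y z := by
  simp only [dot, Prod.fst_add, Prod.snd_add, add_dotProduct]; ring

lemma dot_sub_left (x y z : (ι → ℝ) × (κ → ℝ)) : dot (x - y) z = dot x z - dot y z := by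
  simp only [dot, Prod.fst_sub, Prod.snd_sub, sub_dotProduct]; ring

lemma dot_smul_left (a : ℝ) (x y : (ι → ℝ) × (κ → ℝ)) : dot (a • x) y = a * dot x y := by
  simp only [dot, Prod.smul_fst, Prod.smul_snd, smul_dotProduct, smul_eq_mul]; ring

lemma dot_sub_right (x y z : (ι → ℝ) × (κ → ℝ)) : dot x (y - z) = dot x y - dot x z := by
  rw [dot_comm, dot_sub_left, dot_comm y, dot_comm z]

lemma dot_add_right (x y z : (ι → ℝ) × (κ → ℝ)) : dot x (y + z) = dot x y + dot x z := by
  rw [dot_comm, dot_add_left, dot_comm y, dot_comm z]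

lemma dot_smul_right (a : ℝ) (x y : (ι → ℝ) × (κ → ℝ)) : dot x (a • y) = a * dot x y := by
  rw [dot_comm, dot_smul_left, dot_comm]

lemma dot_zero_left (x : (ι → ℝ) × (κ → ℝ)) : dot 0 x = 0 := by
  simp [dot]

lemma dot_self_nonneg (x : (ι → ℝ) × (κ → ℝ)) : 0 ≤ dot x x :=
  add_nonneg (Finset.sum_nonneg fun i _ => mul_self_nonneg (x.1 i))
    (Finset.sum_nonneg fun j _ => mul_self_nonneg (x.2 j))

lemma dot_self_eq_zero {x : (ι → ℝ) × (κ → ℝ)} : dot x x = 0 ↔ x = 0 := by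
  have h1 : 0 ≤ x.1 ⬝ᵥ x.1 := Finset.sum_nonneg fun i _ => mul_self_nonneg (x.1 i)
  have h2 : 0 ≤ x.2 ⬝ᵥ x.2 := Finset.sum_nonneg fun j _ => mul_self_nonneg (x.2 j)
  rw [dot, add_eq_zero_iff_of_nonneg h1 h2, dotProduct_self_eq_zero, dotProduct_self_eq_zero,
    Prod.ext_iff, Prod.fst_zero, Prod.snd_zero]

lemma norm_sq_le_dotProduct_self (v : ι → ℝ) : ‖v‖ ^ 2 ≤ v ⬝ᵥ v := by
  have hv : ‖v‖ ≤ √(v ⬝ᵥ v) := (pi_norm_le_iff_of_nonneg (Real.sqrt_nonneg _)).2 fun i =>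
    Real.abs_le_sqrt (Finset.single_le_sum (fun j _ => mul_self_nonneg (v j))
      (Finset.mem_univ i) |>.trans_eq' (sq (v i)).symm)
  exact (pow_le_pow_left₀ (norm_nonneg v) hv 2).trans_eq
    (Real.sq_sqrt (Finset.sum_nonneg fun j _ => mul_self_nonneg (v j)))

lemma norm_sq_le_dot_self (x : (ι → ℝ) × (κ → ℝ)) : ‖x‖ ^ 2 ≤ dot x x := by
  rw [Prod.norm_def, dot]
  have h1 := norm_sq_le_dotProduct_self x.1
  have h2 := norm_sq_le_dotProduct_self x.2
  rcases le_total ‖x.1‖ ‖x.2‖ with h | h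
  · rw [max_eq_right h]; nlinarith [norm_nonneg x.1]
  · rw [max_eq_left h]; nlinarith [norm_nonneg x.2]

section DualMap

def marginals (P : ι → κ → ℝ) : (ι → ℝ) × (κ → ℝ) := (fun i => ∑ j, P i j, fun j => ∑ i, P i j)

lemma marginals_sub (P Q : ι → κ → ℝ) : marginals (P - Q) = marginals P - marginals Q := by
  ext <;> simp [marginals, Finset.sum_sub_distrib]

lemma dot_marginals (P : ι → κ → ℝ) (v : (ι → ℝ) × (κ → ℝ)) :
    dot (marginals P) v = ∑ i, ∑ j, P i j * (v.1 i + v.2 j) := by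
  simp only [dot, marginals, dotProduct, mul_add, Finset.sum_add_distrib, Finset.sum_mul]
  congr 1
  rw [Finset.sum_comm (f := fun j i => P i j * v.2 j)]

def plan (c : ι → κ → ℝ) (α : (ι → ℝ) × (κ → ℝ)) : ι → κ → ℝ :=
  fun i j => max (α.1 i + α.2 j - c i j) 0

def dualMap (τ : ℝ) (c : ι → κ → ℝ) (α : (ι → ℝ) × (κ → ℝ)) : (ι → ℝ) × (κ → ℝ) :=
  marginals (plan c α) + τ • α

lemma dot_marginals_plan_sub_nonneg (c : ι → κ → ℝ) (a b : (ι → ℝ) × (κ → ℝ)) :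
    0 ≤ dot (marginals (plan c a - plan c b)) (a - b) := by
  rw [dot_marginals]
  refine Finset.sum_nonneg fun i _ => Finset.sum_nonneg fun j _ => ?_
  refine (max_zero_sub_mul_sub_nonneg (a.1 i + a.2 j - c i j) (b.1 i + b.2 j - c i j)).trans_eq ?_
  simp only [plan, Pi.sub_apply, Prod.fst_sub, Prod.snd_sub]
  ring

lemma mul_dot_self_le_dot_dualMap_sub (τ : ℝ) (c : ι → κ → ℝ) (a b : (ι → ℝ) × (κ → ℝ)) :
    τ * dot (a - b) (a - b) ≤ dot (dualMap τ c a - dualMap τ c b) (a - b) := by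
  have hsplit : dualMap τ c a - dualMap τ c b = marginals (plan c a - plan c b) + τ • (a - b) := by
    rw [dualMap, dualMap, marginals_sub, smul_sub]; abel
  rw [hsplit, dot_add_left, dot_smul_left]
  linarith [dot_marginals_plan_sub_nonneg c a b]

lemma dualMap_injective {τ : ℝ} (hτ : 0 < τ) (c : ι → κ → ℝ) :
    Function.Injective (dualMap τ c) := by
  intro a b hab
  have h := mul_dot_self_le_dot_dualMap_sub τ c a b
  rw [hab, sub_self, dot_zero_left] at h
  have h0 : dot (a - b) (a - b) = 0 :=
    le_antisymm (nonpos_of_mul_nonpos_right h hτ) (dot_self_nonneg _)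
  exact sub_eq_zero.1 (dot_self_eq_zero.1 h0)

end DualMap

section Potential

def potential (τ : ℝ) (c : ι → κ → ℝ) (y α : (ι → ℝ) × (κ → ℝ)) : ℝ :=
  ∑ i, ∑ j, halfSqPos (α.1 i + α.2 j - c i j) + τ / 2 * dot α α - dot y α

lemma continuous_potential (τ : ℝ) (c : ι → κ → ℝ) (y : (ι → ℝ) × (κ → ℝ)) :
    Continuous (potential τ c y) := by
  unfold potential dot dotProduct
  fun_prop

lemma quadratic_le_potential {τ : ℝ} (hτ : 0 < τ) (c : ι → κ → ℝ) (y α : (ι → ℝ) × (κ → ℝ)) :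
    τ / 4 * dot α α - dot y y / τ ≤ potential τ c y α := by
  have hq : 0 ≤ ∑ i, ∑ j, halfSqPos (α.1 i + α.2 j - c i j) :=
    Finset.sum_nonneg fun i _ => Finset.sum_nonneg fun j _ => halfSqPos_nonneg _
  have hsq := dot_self_nonneg ((τ / 2) • α - y)
  simp only [dot_sub_left, dot_sub_right, dot_smul_left, dot_smul_right, dot_comm y α] at hsq
  have hyα : 0 ≤ τ / 4 * dot α α - dot α y + dot y y / τ := by
    refine (div_nonneg hsq hτ.le).trans_eq ?_
    field_simp
    ring
  unfold potential
  rw [dot_comm y α]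
  linarith

lemma tendsto_potential_cocompact {τ : ℝ} (hτ : 0 < τ) (c : ι → κ → ℝ) (y : (ι → ℝ) × (κ → ℝ)) :
    Tendsto (potential τ c y) (cocompact _) atTop := by
  have hquad : Tendsto (fun r : ℝ => τ / 4 * r ^ 2 - dot y y / τ) atTop atTop :=
    tendsto_atTop_add_const_right _ _
      ((tendsto_pow_atTop two_ne_zero).const_mul_atTop (by positivity))
  refine tendsto_atTop_mono (fun α => ?_) (hquad.comp tendsto_norm_cocompact_atTop)
  calc τ / 4 * ‖α‖ ^ 2 - dot y y / τ ≤ τ / 4 * dot α α - dot y y / τ := by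
        gcongr; exact norm_sq_le_dot_self α
    _ ≤ potential τ c y α := quadratic_le_potential hτ c y α

lemma hasDerivAt_potential_line (τ : ℝ) (c : ι → κ → ℝ) (y α v : (ι → ℝ) × (κ → ℝ)) :
    HasDerivAt (fun t : ℝ => potential τ c y (α + t • v)) (dot (dualMap τ c α - y) v) 0 := by
  have hline : (fun t : ℝ => potential τ c y (α + t • v)) = fun t =>
      ∑ i, ∑ j, halfSqPos (α.1 i + α.2 j - c i j + t * (v.1 i + v.2 j))
        + τ / 2 * (dot α α + 2 * t * dot α v + t ^ 2 * dot v v) - (dot y α + t * dot y v) := by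
    funext t
    simp only [potential, dot_add_left, dot_add_right, dot_smul_left, dot_smul_right, dot_comm v α,
      Prod.fst_add, Prod.snd_add, Prod.smul_fst, Prod.smul_snd, Pi.add_apply, Pi.smul_apply,
      smul_eq_mul]
    congr 1
    · congr 1
      · exact Finset.sum_congr rfl fun i _ => Finset.sum_congr rfl fun j _ => by ring_nf
      · ring
  have hplan : HasDerivAt
      (fun t : ℝ => ∑ i, ∑ j, halfSqPos (α.1 i + α.2 j - c i j + t * (v.1 i + v.2 j)))
      (dot (marginals (plan c α)) v) 0 := by
    rw [dot_marginals]
    refine HasDerivAt.fun_sum fun i _ => HasDerivAt.fun_sum fun j _ => ?_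
    simpa [plan, Function.comp_def] using (hasDerivAt_halfSqPos _).comp (0 : ℝ)
      (((hasDerivAt_id (0 : ℝ)).mul_const (v.1 i + v.2 j)).const_add (α.1 i + α.2 j - c i j))
  have hquad : HasDerivAt (fun t : ℝ => τ / 2 * (dot α α + 2 * t * dot α v + t ^ 2 * dot v v))
      (τ * dot α v) 0 := by
    have h := ((((hasDerivAt_id' (0 : ℝ)).const_mul 2).mul_const (dot α v)).const_add
      (dot α α)).fun_add ((hasDerivAt_pow 2 (0 : ℝ)).mul_const (dot v v))
    exact (h.const_mul (τ / 2)).congr_deriv (by simp; ring)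
  have hlin : HasDerivAt (fun t : ℝ => dot y α + t * dot y v) (dot y v) 0 := by
    simpa using ((hasDerivAt_id (0 : ℝ)).mul_const (dot y v)).const_add (dot y α)
  rw [hline, dualMap, dot_sub_left, dot_add_left, dot_smul_left]
  exact (hplan.add hquad).sub hlin

lemma dualMap_eq_of_forall_potential_le {τ : ℝ} {c : ι → κ → ℝ} {y α : (ι → ℝ) × (κ → ℝ)}
    (hmin : ∀ x, potential τ c y α ≤ potential τ c y x) : dualMap τ c α = y := by
  set v := dualMap τ c α - y
  have hloc : IsLocalMin (fun t : ℝ => potential τ c y (α + t • v)) 0 :=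
    Eventually.of_forall fun t => by simpa using hmin (α + t • v)
  have hcrit : dot v v = 0 := hloc.hasDerivAt_eq_zero (hasDerivAt_potential_line τ c y α v)
  exact sub_eq_zero.1 (dot_self_eq_zero.1 hcrit)

lemma dualMap_surjective {τ : ℝ} (hτ : 0 < τ) (c : ι → κ → ℝ) :
    Function.Surjective (dualMap τ c) := fun y =>
  have ⟨α, hα⟩ := (continuous_potential τ c y).exists_forall_le (tendsto_potential_cocompact hτ c y)
  ⟨α, dualMap_eq_of_forall_potential_le hα⟩

end Potential

lemma dualMap_bijective {τ : ℝ} (hτ : 0 < τ) (c : ι → κ → ℝ) : Function.Bijective (dualMap τ c) :=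
  ⟨dualMap_injective hτ c, dualMap_surjective hτ c⟩

lemma dualSys_iff {n1 n2 : ℕ} (γ ε : ℝ) (c : Fin n1 → Fin n2 → ℝ) (μ1 : Fin n1 → ℝ)
    (μ2 : Fin n2 → ℝ) (α : (Fin n1 → ℝ) × (Fin n2 → ℝ)) :
    DualSys γ ε c μ1 μ2 α.1 α.2 ↔ dualMap (γ * ε) c α = γ • (μ1, μ2) := by
  simp [DualSys, dualMap, marginals, plan, Prod.ext_iff, funext_iff]

end RegularizedDual

theorem regularized_dual_system_unique_solution_general (n1 n2 : ℕ)
    (γ ε : ℝ) (hγ : 0 < γ) (hε : 0 < ε) (c : Fin n1 → Fin n2 → ℝ)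
    (μ1 : Fin n1 → ℝ) (μ2 : Fin n2 → ℝ) :
    ∃! α : (Fin n1 → ℝ) × (Fin n2 → ℝ), DualSys γ ε c μ1 μ2 α.1 α.2 := by
  simpa only [RegularizedDual.dualSys_iff] using
    (RegularizedDual.dualMap_bijective (mul_pos hγ hε) c).existsUnique (γ • (μ1, μ2))

/-- For any marginals (with no sign or mass restriction), the regularized dual system
has exactly one solution. -/
theorem regularized_dual_system_unique_solution (n1 n2 : ℕ) (hn1 : 0 < n1) (hn2 : 0 < n2)
    (γ ε : ℝ) (hγ : 0 < γ) (hε : 0 < ε) (c : Fin n1 → Fin n2 → ℝ)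
    (μ1 : Fin n1 → ℝ) (μ2 : Fin n2 → ℝ) :
    ∃! α : (Fin n1 → ℝ) × (Fin n2 → ℝ), DualSys γ ε c μ1 μ2 α.1 α.2 :=
  regularized_dual_system_unique_solution_general n1 n2 γ ε hγ hε c μ1 μ2
end
end

section
/- Let n1, n2 be positive integers, let γ > 0 and ε > 0, and let c ∈ ℝ^{n1×n2}. Let F_{γ,ε} : ℝ^{n1} × ℝ^{n2} → ℝ^{n1} × ℝ^{n2} map (μ1, μ2) to the unique solution (α1, α2) of the regularized dual system, and let S_{γ,ε}(μ1, μ2) := (1/γ)(α1 ⊕ α2 − c)_+ where (α1, α2) = F_{γ,ε}(μ1, μ2). Then both F_{γ,ε} and S_{γ,ε} are Lipschitz continuous: there exist constants L1, L2 ≥ 0 such that ‖F_{γ,ε}(μ) − F_{γ,ε}(ν)‖ ≤ L1 ‖μ − ν‖ and ‖S_{γ,ε}(μ) − S_{γ,ε}(ν)‖_F ≤ L2 ‖μ − ν‖ for all μ, ν ∈ ℝ^{n1} × ℝ^{n2}. -/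
noncomputable section

/-- The regularized marginal-to-transport-plan mapping S_{γ,ε} associated with a solution
operator F of the regularized dual system. -/
def Smap {n1 n2 : ℕ} (γ : ℝ) (c : Fin n1 → Fin n2 → ℝ)
    (F : (Fin n1 → ℝ) × (Fin n2 → ℝ) → (Fin n1 → ℝ) × (Fin n2 → ℝ))
    (μ : (Fin n1 → ℝ) × (Fin n2 → ℝ)) : Fin n1 → Fin n2 → ℝ :=
  fun i j => (1 / γ) * max ((F μ).1 i + (F μ).2 j - c i j) 0

/-!
Write `P(α)` for the unnormalised plan `(α1 ⊕ α2 - c)_+`. The dual system reads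
`(row and column sums of P(α)) + γ ε α = γ μ`, and since `x ↦ x₊` is monotone, pairing the
difference of two such systems with `α - β` makes the plan terms nonnegative; what remains is
`ε ‖α - β‖₂² ≤ ⟪μ - ν, α - β⟫`, so `F` is Lipschitz (comparing with the sup norm costs a factor
`n1 + n2`). Since `x ↦ x₊` is also 1-Lipschitz, `S` is Lipschitz as well.
-/

open Finset

section Plan

variable {ι κ : Type*}

def posPartPlan (c : ι → κ → ℝ) (α1 : ι → ℝ) (α2 : κ → ℝ) (i : ι) (j : κ) : ℝ :=
  max (α1 i + α2 j - c i j) 0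

lemma max_zero_sub_max_zero_mul_sub_nonneg (x y : ℝ) :
    0 ≤ (max x 0 - max y 0) * (x - y) := by
  rcases le_total x y with h | h
  · exact mul_nonneg_of_nonpos_of_nonpos (sub_nonpos.2 (max_le_max_right 0 h)) (sub_nonpos.2 h)
  · exact mul_nonneg (sub_nonneg.2 (max_le_max_right 0 h)) (sub_nonneg.2 h)

lemma marginals_posPartPlan_sub_dotProduct_nonneg [Fintype ι] [Fintype κ] (c : ι → κ → ℝ) (α1 β1 : ι → ℝ)
    (α2 β2 : κ → ℝ) :
    0 ≤ (fun i => ∑ j, (posPartPlan c α1 α2 i j - posPartPlan c β1 β2 i j)) ⬝ᵥ (α1 - β1) +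
      (fun j => ∑ i, (posPartPlan c α1 α2 i j - posPartPlan c β1 β2 i j)) ⬝ᵥ (α2 - β2) := by
  simp only [dotProduct, Pi.sub_apply, sum_mul]
  rw [sum_comm (f := fun j i => _ * (α2 j - β2 j)), ← sum_add_distrib]
  refine sum_nonneg fun i _ => ?_
  rw [← sum_add_distrib]
  refine sum_nonneg fun j _ => ?_
  rw [← mul_add, show α1 i - β1 i + (α2 j - β2 j)
    = (α1 i + α2 j - c i j) - (β1 i + β2 j - c i j) by ring]
  exact max_zero_sub_max_zero_mul_sub_nonneg _ _

lemma abs_posPartPlan_sub_le (c : ι → κ → ℝ) (α1 β1 : ι → ℝ) (α2 β2 : κ → ℝ) (i : ι) (j : κ) :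
    |posPartPlan c α1 α2 i j - posPartPlan c β1 β2 i j| ≤ |α1 i - β1 i| + |α2 j - β2 j| :=
  calc |posPartPlan c α1 α2 i j - posPartPlan c β1 β2 i j|
      ≤ |(α1 i + α2 j - c i j) - (β1 i + β2 j - c i j)| := abs_max_sub_max_le_abs _ _ _
    _ = |(α1 i - β1 i) + (α2 j - β2 j)| := by congr 1; ring
    _ ≤ |α1 i - β1 i| + |α2 j - β2 j| := abs_add_le _ _

end Plan

section SupNorm

variable {ι κ : Type*} [Fintype ι] [Fintype κ]

lemma abs_apply_fst_le_norm (p : (ι → ℝ) × (κ → ℝ)) (i : ι) : |p.1 i| ≤ ‖p‖ :=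
  (norm_le_pi_norm p.1 i).trans (norm_fst_le p)

lemma abs_apply_snd_le_norm (p : (ι → ℝ) × (κ → ℝ)) (j : κ) : |p.2 j| ≤ ‖p‖ :=
  (norm_le_pi_norm p.2 j).trans (norm_snd_le p)

omit [Fintype κ] in
lemma dotProduct_le_card_mul_norm_mul_norm (x y : ι → ℝ) :
    x ⬝ᵥ y ≤ Fintype.card ι * (‖x‖ * ‖y‖) := by
  rw [← nsmul_eq_mul, ← card_univ]
  refine sum_le_card_nsmul _ _ _ fun i _ => ?_
  calc x i * y i ≤ |x i| * |y i| := (le_abs_self _).trans (abs_mul _ _).le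
    _ ≤ ‖x‖ * ‖y‖ := mul_le_mul (norm_le_pi_norm x i) (norm_le_pi_norm y i)
        (abs_nonneg _) (norm_nonneg _)

omit [Fintype κ] in
lemma sq_norm_le_dotProduct_self (x : ι → ℝ) : ‖x‖ ^ 2 ≤ x ⬝ᵥ x := by
  have hx : 0 ≤ x ⬝ᵥ x := sum_nonneg fun i _ => mul_self_nonneg (x i)
  refine (Real.le_sqrt (norm_nonneg x) hx).1 <|
    (pi_norm_le_iff_of_nonneg (Real.sqrt_nonneg _)).2 fun i => Real.abs_le_sqrt ?_
  rw [sq]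
  exact single_le_sum (f := fun i => x i * x i) (fun i _ => mul_self_nonneg (x i)) (mem_univ i)

lemma sq_norm_prod_le_dotProduct_self (p : (ι → ℝ) × (κ → ℝ)) :
    ‖p‖ ^ 2 ≤ p.1 ⬝ᵥ p.1 + p.2 ⬝ᵥ p.2 := by
  have h1 := sq_norm_le_dotProduct_self p.1
  have h2 := sq_norm_le_dotProduct_self p.2
  rw [Prod.norm_def]
  rcases le_total ‖p.1‖ ‖p.2‖ with h | h
  · rw [max_eq_right h]; nlinarith [sq_nonneg ‖p.1‖]
  · rw [max_eq_left h]; nlinarith [sq_nonneg ‖p.2‖]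

lemma norm_le_of_mul_dotProduct_self_le {ε : ℝ} (hε : 0 < ε) (p q : (ι → ℝ) × (κ → ℝ))
    (h : ε * (p.1 ⬝ᵥ p.1 + p.2 ⬝ᵥ p.2) ≤ q.1 ⬝ᵥ p.1 + q.2 ⬝ᵥ p.2) :
    ‖p‖ ≤ (Fintype.card ι + Fintype.card κ) / ε * ‖q‖ := by
  have hquad : ε * ‖p‖ ^ 2 ≤ (Fintype.card ι + Fintype.card κ) * ‖q‖ * ‖p‖ :=
    calc ε * ‖p‖ ^ 2 ≤ ε * (p.1 ⬝ᵥ p.1 + p.2 ⬝ᵥ p.2) :=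
          mul_le_mul_of_nonneg_left (sq_norm_prod_le_dotProduct_self p) hε.le
      _ ≤ q.1 ⬝ᵥ p.1 + q.2 ⬝ᵥ p.2 := h
      _ ≤ Fintype.card ι * (‖q.1‖ * ‖p.1‖) + Fintype.card κ * (‖q.2‖ * ‖p.2‖) :=
          add_le_add (dotProduct_le_card_mul_norm_mul_norm _ _)
            (dotProduct_le_card_mul_norm_mul_norm _ _)
      _ ≤ Fintype.card ι * (‖q‖ * ‖p‖) + Fintype.card κ * (‖q‖ * ‖p‖) := by
          gcongr <;> first | exact norm_fst_le _ | exact norm_snd_le _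
      _ = (Fintype.card ι + Fintype.card κ) * ‖q‖ * ‖p‖ := by ring
  rw [div_mul_eq_mul_div, le_div_iff₀ hε]
  rcases (norm_nonneg p).eq_or_lt with hp | hp
  · rw [← hp, zero_mul]; positivity
  · nlinarith

lemma sqrt_sum_sum_sq_le (f : ι → κ → ℝ) {B : ℝ} (hB : 0 ≤ B) (hf : ∀ i j, |f i j| ≤ B) :
    √(∑ i, ∑ j, f i j ^ 2) ≤ √(Fintype.card ι * Fintype.card κ) * B := by
  have hsum : ∑ i, ∑ j, f i j ^ 2 ≤ Fintype.card ι * Fintype.card κ * B ^ 2 :=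
    calc ∑ i, ∑ j, f i j ^ 2 ≤ ∑ _i : ι, ∑ _j : κ, B ^ 2 :=
          sum_le_sum fun i _ => sum_le_sum fun j _ => sq_le_sq' (abs_le.1 (hf i j)).1
            ((le_abs_self _).trans (hf i j))
      _ = Fintype.card ι * Fintype.card κ * B ^ 2 := by
          simp only [sum_const, card_univ, nsmul_eq_mul]; ring
  calc √(∑ i, ∑ j, f i j ^ 2) ≤ √(Fintype.card ι * Fintype.card κ * B ^ 2) :=
        Real.sqrt_le_sqrt hsum
    _ = √(Fintype.card ι * Fintype.card κ) * B := by
        rw [Real.sqrt_mul (by positivity), Real.sqrt_sq hB]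

end SupNorm

section DualSys

variable {n1 n2 : ℕ} {γ ε : ℝ} {c : Fin n1 → Fin n2 → ℝ}

lemma DualSys.mul_dotProduct_sub_le {μ1 ν1 α1 β1 : Fin n1 → ℝ} {μ2 ν2 α2 β2 : Fin n2 → ℝ}
    (hγ : 0 < γ) (hα : DualSys γ ε c μ1 μ2 α1 α2) (hβ : DualSys γ ε c ν1 ν2 β1 β2) :
    ε * ((α1 - β1) ⬝ᵥ (α1 - β1) + (α2 - β2) ⬝ᵥ (α2 - β2)) ≤
      (μ1 - ν1) ⬝ᵥ (α1 - β1) + (μ2 - ν2) ⬝ᵥ (α2 - β2) := by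
  have hrow : (fun i => ∑ j, (posPartPlan c α1 α2 i j - posPartPlan c β1 β2 i j)) =
      γ • (μ1 - ν1) - (γ * ε) • (α1 - β1) := funext fun i => by
    simp only [posPartPlan, sum_sub_distrib, Pi.sub_apply, Pi.smul_apply, smul_eq_mul]
    linear_combination hα.1 i - hβ.1 i
  have hcol : (fun j => ∑ i, (posPartPlan c α1 α2 i j - posPartPlan c β1 β2 i j)) =
      γ • (μ2 - ν2) - (γ * ε) • (α2 - β2) := funext fun j => by
    simp only [posPartPlan, sum_sub_distrib, Pi.sub_apply, Pi.smul_apply, smul_eq_mul]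
    linear_combination hα.2 j - hβ.2 j
  have h := marginals_posPartPlan_sub_dotProduct_nonneg c α1 β1 α2 β2
  rw [hrow, hcol] at h
  -- opaque names keep `sub_dotProduct` from splitting the differences themselves
  set d1 := α1 - β1
  set d2 := α2 - β2
  set m1 := μ1 - ν1
  set m2 := μ2 - ν2
  simp only [sub_dotProduct, smul_dotProduct, smul_eq_mul] at h
  nlinarith

lemma abs_Smap_sub_le (hγ : 0 ≤ γ)
    (F : (Fin n1 → ℝ) × (Fin n2 → ℝ) → (Fin n1 → ℝ) × (Fin n2 → ℝ))
    (μ ν : (Fin n1 → ℝ) × (Fin n2 → ℝ)) (i : Fin n1) (j : Fin n2) :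
    |Smap γ c F μ i j - Smap γ c F ν i j| ≤ 2 / γ * ‖F μ - F ν‖ := by
  change |1 / γ * posPartPlan c (F μ).1 (F μ).2 i j - 1 / γ * posPartPlan c (F ν).1 (F ν).2 i j|
    ≤ _
  rw [← mul_sub, abs_mul, abs_of_nonneg (by positivity)]
  calc 1 / γ * |posPartPlan c (F μ).1 (F μ).2 i j - posPartPlan c (F ν).1 (F ν).2 i j|
      ≤ 1 / γ * (‖F μ - F ν‖ + ‖F μ - F ν‖) := by
        gcongr
        exact (abs_posPartPlan_sub_le _ _ _ _ _ _ _).trans <| add_le_add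
          (abs_apply_fst_le_norm (F μ - F ν) i) (abs_apply_snd_le_norm (F μ - F ν) j)
    _ = 2 / γ * ‖F μ - F ν‖ := by ring

end DualSys

theorem solution_operator_and_Smap_lipschitz_general (n1 n2 : ℕ)
    (γ ε : ℝ) (hγ : 0 < γ) (hε : 0 < ε) (c : Fin n1 → Fin n2 → ℝ)
    (F : (Fin n1 → ℝ) × (Fin n2 → ℝ) → (Fin n1 → ℝ) × (Fin n2 → ℝ))
    (hF : ∀ μ : (Fin n1 → ℝ) × (Fin n2 → ℝ), DualSys γ ε c μ.1 μ.2 (F μ).1 (F μ).2) :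
    ∃ L1 L2 : ℝ, 0 ≤ L1 ∧ 0 ≤ L2 ∧
      (∀ μ ν : (Fin n1 → ℝ) × (Fin n2 → ℝ), ‖F μ - F ν‖ ≤ L1 * ‖μ - ν‖) ∧
      (∀ μ ν : (Fin n1 → ℝ) × (Fin n2 → ℝ),
        Real.sqrt (∑ i, ∑ j, (Smap γ c F μ i j - Smap γ c F ν i j) ^ 2) ≤ L2 * ‖μ - ν‖) := by
  set L1 : ℝ := (n1 + n2) / ε
  have hF_lip : ∀ μ ν, ‖F μ - F ν‖ ≤ L1 * ‖μ - ν‖ := fun μ ν => by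
    simpa only [Fintype.card_fin] using norm_le_of_mul_dotProduct_self_le hε (F μ - F ν) (μ - ν)
      ((hF μ).mul_dotProduct_sub_le hγ (hF ν))
  refine ⟨L1, √(n1 * n2) * (2 / γ * L1), by positivity, by positivity, hF_lip, fun μ ν => ?_⟩
  calc √(∑ i, ∑ j, (Smap γ c F μ i j - Smap γ c F ν i j) ^ 2)
      ≤ √(n1 * n2) * (2 / γ * ‖F μ - F ν‖) := by
        simpa only [Fintype.card_fin] using
          sqrt_sum_sum_sq_le _ (by positivity) (abs_Smap_sub_le hγ.le F μ ν)
    _ ≤ √(n1 * n2) * (2 / γ * (L1 * ‖μ - ν‖)) := by gcongr; exact hF_lip μ ν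
    _ = √(n1 * n2) * (2 / γ * L1) * ‖μ - ν‖ := by ring

/-- Both the solution operator F_{γ,ε} of the regularized dual system and the regularized
marginal-to-transport-plan mapping S_{γ,ε} are Lipschitz continuous. -/
theorem solution_operator_and_Smap_lipschitz (n1 n2 : ℕ) (hn1 : 0 < n1) (hn2 : 0 < n2)
    (γ ε : ℝ) (hγ : 0 < γ) (hε : 0 < ε) (c : Fin n1 → Fin n2 → ℝ)
    (F : (Fin n1 → ℝ) × (Fin n2 → ℝ) → (Fin n1 → ℝ) × (Fin n2 → ℝ))
    (hF : ∀ μ : (Fin n1 → ℝ) × (Fin n2 → ℝ), DualSys γ ε c μ.1 μ.2 (F μ).1 (F μ).2) :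
    ∃ L1 L2 : ℝ, 0 ≤ L1 ∧ 0 ≤ L2 ∧
      (∀ μ ν : (Fin n1 → ℝ) × (Fin n2 → ℝ), ‖F μ - F ν‖ ≤ L1 * ‖μ - ν‖) ∧
      (∀ μ ν : (Fin n1 → ℝ) × (Fin n2 → ℝ),
        Real.sqrt (∑ i, ∑ j, (Smap γ c F μ i j - Smap γ c F ν i j) ^ 2) ≤ L2 * ‖μ - ν‖) :=
  solution_operator_and_Smap_lipschitz_general n1 n2 γ ε hγ hε c F hF
end
end

section
/- Let n1, n2 be positive integers, let γ > 0 and ε > 0, let c ∈ ℝ^{n1×n2}, and let d ∈ ℝ^{n1×n2} be any matrix (in the application, d = α1 ⊕ α2 − c with (α1, α2) = F_{γ,ε}(μ)). Then for every (h1, h2) ∈ ℝ^{n1} × ℝ^{n2}, there exists exactly one pair (η1, η2) ∈ ℝ^{n1} × ℝ^{n2} satisfying Σ_j max'(d_{ij}; (η1)_i + (η2)_j) + γ ε (η1)_i = γ (h1)_i for all i, and Σ_i max'(d_{ij}; (η1)_i + (η2)_j) + γ ε (η2)_j = γ (h2)_j for all j, where max'(a; b) := b if a > 0, max(0, b) if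 a = 0, and 0 if a < 0. -/
/-! The system says that the gradient of the function `linSysPotential`, built from the
primitives `maxdPotential a` of `maxd a`, vanishes. Since `maxd a` is monotone and vanishes at `0`,
these primitives are nonnegative, so the potential grows quadratically and attains its minimum,
where all its directional derivatives vanish: this gives a solution. For two solutions `η, η'`,
pairing the difference of the left-hand sides with `η - η'` gives `0`, while the monotonicity of
`maxd a` bounds it below by `γ ε ‖η - η'‖²`; hence `η = η'`. -/

noncomputable section

/-- max'(a; b), the directional derivative of x ↦ max(0, x) at a in direction b. -/
def maxd (a b : ℝ) : ℝ := if 0 < a then b else if a = 0 then max 0 b else 0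

/-- The linearized dual system in the unknowns (η1, η2) with data matrix d and
right-hand side (h1, h2). -/
def LinSys {n1 n2 : ℕ} (γ ε : ℝ) (d : Fin n1 → Fin n2 → ℝ)
    (h1 : Fin n1 → ℝ) (h2 : Fin n2 → ℝ) (η1 : Fin n1 → ℝ) (η2 : Fin n2 → ℝ) : Prop :=
  (∀ i, (∑ j, maxd (d i j) (η1 i + η2 j)) + γ * ε * η1 i = γ * h1 i) ∧
  (∀ j, (∑ i, maxd (d i j) (η1 i + η2 j)) + γ * ε * η2 j = γ * h2 j)

open Finset Filter

lemma maxd_mono (a : ℝ) : Monotone (maxd a) := by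
  unfold maxd; split_ifs
  exacts [monotone_id, fun _ _ h => max_le_max le_rfl h, monotone_const]

lemma continuous_maxd (a : ℝ) : Continuous (maxd a) := by
  unfold maxd; split_ifs
  exacts [continuous_id, continuous_const.max continuous_id, continuous_const]

lemma maxd_zero_right (a : ℝ) : maxd a 0 = 0 := by
  unfold maxd; split_ifs <;> simp

lemma maxd_sub_mul_sub_nonneg (a x y : ℝ) : 0 ≤ (maxd a x - maxd a y) * (x - y) :=
  ((maxd_mono a).monovary monotone_id).sub_mul_sub_nonneg y x

def maxdPotential (a b : ℝ) : ℝ := ∫ t in (0)..b, maxd a t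

lemma hasDerivAt_maxdPotential (a b : ℝ) : HasDerivAt (maxdPotential a) (maxd a b) b :=
  ((continuous_maxd a).integral_hasStrictDerivAt 0 b).hasDerivAt

@[fun_prop]
lemma continuous_maxdPotential (a : ℝ) : Continuous (maxdPotential a) :=
  continuous_iff_continuousAt.2 fun b => (hasDerivAt_maxdPotential a b).continuousAt

lemma maxdPotential_nonneg (a b : ℝ) : 0 ≤ maxdPotential a b := by
  rcases le_total 0 b with hb | hb
  · exact intervalIntegral.integral_nonneg hb fun t ht => maxd_zero_right a ▸ maxd_mono a ht.1
  · rw [maxdPotential, intervalIntegral.integral_symm, ← intervalIntegral.integral_neg]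
    exact intervalIntegral.integral_nonneg hb fun t ht =>
      neg_nonneg.2 (maxd_zero_right a ▸ maxd_mono a ht.2)

lemma HasDerivAt.comp_line {f : ℝ → ℝ} {f' x : ℝ} (y : ℝ) (hf : HasDerivAt f f' x) :
    HasDerivAt (fun s => f (x + s * y)) (f' * y) 0 := by
  have hline : HasDerivAt (fun s : ℝ => x + s * y) y 0 := by
    simpa using ((hasDerivAt_id (0 : ℝ)).mul_const y).const_add x
  exact hf.comp_of_eq 0 hline (by simp)

section
variable {ι κ : Type*} [Fintype ι] [Fintype κ]

lemma sum_maxd_sub_mul_sub_nonneg (d : ι → κ → ℝ) (u u' : ι → ℝ) (v v' : κ → ℝ) :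
    0 ≤ ∑ i, (∑ j, maxd (d i j) (u i + v j) - ∑ j, maxd (d i j) (u' i + v' j)) * (u i - u' i)
      + ∑ j, (∑ i, maxd (d i j) (u i + v j) - ∑ i, maxd (d i j) (u' i + v' j)) * (v j - v' j) :=
  calc 0 ≤ ∑ i, ∑ j, (maxd (d i j) (u i + v j) - maxd (d i j) (u' i + v' j))
        * ((u i + v j) - (u' i + v' j)) :=
        sum_nonneg fun i _ => sum_nonneg fun j _ => maxd_sub_mul_sub_nonneg _ _ _
    _ = _ := by
      simp only [← sum_sub_distrib, sum_mul]
      rw [sum_comm (f := fun j i => _ * (v j - v' j)), ← sum_add_distrib]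
      refine sum_congr rfl fun i _ => ?_
      rw [← sum_add_distrib]
      exact sum_congr rfl fun j _ => by ring

lemma sq_sub_mul_lower_bound {ε : ℝ} (hε : 0 < ε) (x h : ℝ) :
    ε / 4 * x ^ 2 - h ^ 2 / ε ≤ ε / 2 * x ^ 2 - h * x := by
  have key : ε / 2 * x ^ 2 - h * x - (ε / 4 * x ^ 2 - h ^ 2 / ε) = (ε * x / 2 - h) ^ 2 / ε := by
    field_simp; ring
  have : 0 ≤ (ε * x / 2 - h) ^ 2 / ε := by positivity
  linarith

lemma sq_norm_le_sum_sq (x : ι → ℝ) : ‖x‖ ^ 2 ≤ ∑ i, x i ^ 2 := by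
  have hle : ‖x‖ ≤ √(∑ i, x i ^ 2) :=
    (pi_norm_le_iff_of_nonneg (Real.sqrt_nonneg _)).2 fun i =>
      Real.abs_le_sqrt (single_le_sum (fun i _ => sq_nonneg (x i)) (mem_univ i))
  calc ‖x‖ ^ 2 ≤ √(∑ i, x i ^ 2) ^ 2 := by gcongr
    _ = ∑ i, x i ^ 2 := Real.sq_sqrt (by positivity)

lemma sq_norm_prod_le (p : (ι → ℝ) × (κ → ℝ)) : ‖p‖ ^ 2 ≤ ∑ i, p.1 i ^ 2 + ∑ j, p.2 j ^ 2 := by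
  have h1 := sq_norm_le_sum_sq p.1
  have h2 := sq_norm_le_sum_sq p.2
  rw [Prod.norm_def]
  rcases max_choice ‖p.1‖ ‖p.2‖ with h | h <;> rw [h] <;>
    nlinarith [sq_nonneg ‖p.1‖, sq_nonneg ‖p.2‖]

variable (γ ε : ℝ) (d : ι → κ → ℝ) (h1 : ι → ℝ) (h2 : κ → ℝ)

def linSysPotential (p : (ι → ℝ) × (κ → ℝ)) : ℝ :=
  ∑ i, ∑ j, maxdPotential (d i j) (p.1 i + p.2 j) + γ * ∑ i, (ε / 2 * p.1 i ^ 2 - h1 i * p.1 i)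
    + γ * ∑ j, (ε / 2 * p.2 j ^ 2 - h2 j * p.2 j)

lemma continuous_linSysPotential : Continuous (linSysPotential γ ε d h1 h2) := by
  unfold linSysPotential
  fun_prop

variable {γ ε} in
lemma linSysPotential_lower (hγ : 0 < γ) (hε : 0 < ε) (p : (ι → ℝ) × (κ → ℝ)) :
    γ * ε / 4 * ‖p‖ ^ 2 - γ * (∑ i, h1 i ^ 2 / ε + ∑ j, h2 j ^ 2 / ε)
      ≤ linSysPotential γ ε d h1 h2 p := by
  have hpot : 0 ≤ ∑ i, ∑ j, maxdPotential (d i j) (p.1 i + p.2 j) :=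
    sum_nonneg fun i _ => sum_nonneg fun j _ => maxdPotential_nonneg _ _
  have hq1 : ∑ i, (ε / 4 * p.1 i ^ 2 - h1 i ^ 2 / ε) ≤ ∑ i, (ε / 2 * p.1 i ^ 2 - h1 i * p.1 i) :=
    sum_le_sum fun i _ => sq_sub_mul_lower_bound hε _ _
  have hq2 : ∑ j, (ε / 4 * p.2 j ^ 2 - h2 j ^ 2 / ε) ≤ ∑ j, (ε / 2 * p.2 j ^ 2 - h2 j * p.2 j) :=
    sum_le_sum fun j _ => sq_sub_mul_lower_bound hε _ _
  have hnorm := mul_le_mul_of_nonneg_left (sq_norm_prod_le p) (by positivity : 0 ≤ γ * ε / 4)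
  simp only [linSysPotential, sum_sub_distrib, ← mul_sum] at hq1 hq2 ⊢
  nlinarith [mul_le_mul_of_nonneg_left (add_le_add hq1 hq2) hγ.le]

variable {γ ε} in
lemma tendsto_linSysPotential_cocompact (hγ : 0 < γ) (hε : 0 < ε) :
    Tendsto (linSysPotential γ ε d h1 h2) (cocompact _) atTop := by
  have hquad : Tendsto
      (fun t : ℝ => γ * ε / 4 * t ^ 2 - γ * (∑ i, h1 i ^ 2 / ε + ∑ j, h2 j ^ 2 / ε)) atTop atTop :=
    tendsto_atTop_add_const_right _ _
      ((tendsto_pow_atTop two_ne_zero).const_mul_atTop (by positivity))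
  exact tendsto_atTop_mono (linSysPotential_lower d h1 h2 hγ hε)
    (hquad.comp tendsto_norm_cocompact_atTop)

lemma hasDerivAt_linSysPotential_line (p q : (ι → ℝ) × (κ → ℝ)) :
    HasDerivAt (fun s : ℝ => linSysPotential γ ε d h1 h2 (p + s • q))
      (∑ i, ∑ j, maxd (d i j) (p.1 i + p.2 j) * (q.1 i + q.2 j)
        + γ * ∑ i, (ε * p.1 i - h1 i) * q.1 i + γ * ∑ j, (ε * p.2 j - h2 j) * q.2 j) 0 := by
  have hquad (x h : ℝ) : HasDerivAt (fun t => ε / 2 * t ^ 2 - h * t) (ε * x - h) x := by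
    refine (((hasDerivAt_pow 2 x).const_mul (ε / 2)).fun_sub
      ((hasDerivAt_id' x).const_mul h)).congr_deriv ?_
    norm_num
    ring
  have hline (a b c e s : ℝ) : a + s * b + (c + s * e) = a + c + s * (b + e) := by ring
  simp only [linSysPotential, Prod.fst_add, Prod.snd_add, Prod.smul_fst, Prod.smul_snd,
    Pi.add_apply, Pi.smul_apply, smul_eq_mul, hline]
  refine ((HasDerivAt.fun_sum fun i _ => HasDerivAt.fun_sum fun j _ =>
    (hasDerivAt_maxdPotential _ _).comp_line _).add
    ((HasDerivAt.fun_sum fun i _ => (hquad _ _).comp_line _).const_mul γ)).add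
    ((HasDerivAt.fun_sum fun j _ => (hquad _ _).comp_line _).const_mul γ)

end

lemma linSys_of_forall_le {n1 n2 : ℕ} {γ ε : ℝ} {d : Fin n1 → Fin n2 → ℝ}
    {h1 : Fin n1 → ℝ} {h2 : Fin n2 → ℝ} {p : (Fin n1 → ℝ) × (Fin n2 → ℝ)}
    (hp : ∀ q, linSysPotential γ ε d h1 h2 p ≤ linSysPotential γ ε d h1 h2 q) :
    LinSys γ ε d h1 h2 p.1 p.2 := by
  have hcrit (q : (Fin n1 → ℝ) × (Fin n2 → ℝ)) :=
    IsLocalMin.hasDerivAt_eq_zero (f := fun s : ℝ => linSysPotential γ ε d h1 h2 (p + s • q))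
    (Eventually.of_forall fun s => by simpa using hp (p + s • q))
    (hasDerivAt_linSysPotential_line γ ε d h1 h2 p q)
  constructor
  · intro i
    have := hcrit (Pi.single i 1, 0)
    simp only [Pi.single_apply, Pi.zero_apply, add_zero, mul_ite, mul_one, mul_zero, sum_ite_irrel,
      sum_const_zero, sum_ite_eq', mem_univ, ↓reduceIte] at this
    linarith
  · intro j
    have := hcrit (0, Pi.single j 1)
    simp only [Pi.zero_apply, Pi.single_apply, zero_add, mul_ite, mul_one, mul_zero, sum_ite_eq',
      mem_univ, ↓reduceIte, sum_const_zero, add_zero] at this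
    linarith

lemma LinSys.unique {n1 n2 : ℕ} {γ ε : ℝ} (hγ : 0 < γ) (hε : 0 < ε)
    {d : Fin n1 → Fin n2 → ℝ} {h1 : Fin n1 → ℝ} {h2 : Fin n2 → ℝ}
    {u u' : Fin n1 → ℝ} {v v' : Fin n2 → ℝ}
    (h : LinSys γ ε d h1 h2 u v) (h' : LinSys γ ε d h1 h2 u' v') : u = u' ∧ v = v' := by
  have hrow (i : Fin n1) : ∑ j, maxd (d i j) (u i + v j) - ∑ j, maxd (d i j) (u' i + v' j)
      = -(γ * ε) * (u i - u' i) := by linarith [h.1 i, h'.1 i]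
  have hcol (j : Fin n2) : ∑ i, maxd (d i j) (u i + v j) - ∑ i, maxd (d i j) (u' i + v' j)
      = -(γ * ε) * (v j - v' j) := by linarith [h.2 j, h'.2 j]
  have hmono := sum_maxd_sub_mul_sub_nonneg d u u' v v'
  simp only [hrow, hcol, mul_assoc, ← mul_sum, ← sq] at hmono
  have hzero : ∑ i, (u i - u' i) ^ 2 + ∑ j, (v j - v' j) ^ 2 = 0 :=
    le_antisymm (by nlinarith [mul_pos hγ hε]) (by positivity)
  rw [add_eq_zero_iff_of_nonneg (by positivity) (by positivity),
    sum_eq_zero_iff_of_nonneg (fun _ _ => sq_nonneg _),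
    sum_eq_zero_iff_of_nonneg (fun _ _ => sq_nonneg _)] at hzero
  simp only [mem_univ, forall_const, pow_eq_zero_iff two_ne_zero, sub_eq_zero] at hzero
  exact ⟨funext hzero.1, funext hzero.2⟩

theorem linearized_dual_system_unique_solution_general (n1 n2 : ℕ)
    (γ ε : ℝ) (hγ : 0 < γ) (hε : 0 < ε)
    (d : Fin n1 → Fin n2 → ℝ) (h1 : Fin n1 → ℝ) (h2 : Fin n2 → ℝ) :
    ∃! η : (Fin n1 → ℝ) × (Fin n2 → ℝ), LinSys γ ε d h1 h2 η.1 η.2 := by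
  obtain ⟨p, hp⟩ := (continuous_linSysPotential γ ε d h1 h2).exists_forall_le
    (tendsto_linSysPotential_cocompact d h1 h2 hγ hε)
  have hsol := linSys_of_forall_le hp
  refine ⟨p, hsol, fun q hq => ?_⟩
  obtain ⟨h₁, h₂⟩ := hq.unique hγ hε hsol
  exact Prod.ext h₁ h₂

/-- The linearized dual system has exactly one solution for any right-hand side. -/
theorem linearized_dual_system_unique_solution (n1 n2 : ℕ) (hn1 : 0 < n1) (hn2 : 0 < n2)
    (γ ε : ℝ) (hγ : 0 < γ) (hε : 0 < ε) (c : Fin n1 → Fin n2 → ℝ)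
    (d : Fin n1 → Fin n2 → ℝ) (h1 : Fin n1 → ℝ) (h2 : Fin n2 → ℝ) :
    ∃! η : (Fin n1 → ℝ) × (Fin n2 → ℝ), LinSys γ ε d h1 h2 η.1 η.2 :=
  linearized_dual_system_unique_solution_general n1 n2 γ ε hγ hε d h1 h2
end
end
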